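/- arXiv:2304.00610 — 2 statements merged into one kernel-verified Lean document; each statement's English description precedes it below -/
import Mathlib

section
/- The set R of Kolmogorov-random strings (incompressible by half) is not computable. -/
/-- Counting lemma: for each `n ≥ 2` there is an incompressible string of length `n`. -/
lemma exists_random_aux (U : List Bool →. List Bool) (n : ℕ) (hn : 2 ≤ n) :
    ∃ x : List Bool, x.length = n ∧ ∀ p : List Bool, p.length ≤ n / 2 → ¬ x ∈ U p := by
  by_contra h
  push_neg at h
  set m := n / 2 with hm
  have h' : ∀ v : Fin n → Bool, ∃ p : List Bool, p.length ≤ m ∧ (List.ofFn v) ∈ U p := by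
    intro v
    obtain ⟨p, hp1, hp2⟩ := h (List.ofFn v) (by simp)
    exact ⟨p, hp1, hp2⟩
  choose φ h1 h2 using h'
  have hinj : Function.Injective φ := by
    intro v w hvw
    have := Part.mem_unique (h2 v) (hvw ▸ h2 w)
    exact List.ofFn_injective this
  set T : Finset (List Bool) :=
    (Finset.range (m + 1)).biUnion fun k =>
      (Finset.univ : Finset (Fin k → Bool)).image fun v => List.ofFn v with hT
  have hmaps : ∀ v : Fin n → Bool, φ v ∈ T := by
    intro v
    have hlen := h1 v
    refine Finset.mem_biUnion.2 ⟨(φ v).length, Finset.mem_range.2 (by omega), ?_⟩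
    exact Finset.mem_image.2 ⟨fun i => (φ v).get i, Finset.mem_univ _, List.ofFn_get _⟩
  have hcard : Fintype.card (Fin n → Bool) ≤ T.card := by
    have := Finset.card_le_card_of_injOn (s := (Finset.univ : Finset (Fin n → Bool)))
      φ (fun v _ => hmaps v) hinj.injOn
    simpa using this
  have hcu : Fintype.card (Fin n → Bool) = 2 ^ n := by simp
  have hTle : T.card ≤ ∑ k ∈ Finset.range (m + 1), 2 ^ k := by
    refine le_trans (Finset.card_biUnion_le) ?_
    refine Finset.sum_le_sum fun k _ => ?_
    refine le_trans (Finset.card_image_le) ?_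
    simp
  have hsum : ∀ t : ℕ, ∑ k ∈ Finset.range t, 2 ^ k = 2 ^ t - 1 := by
    intro t
    induction t with
    | zero => simp
    | succ t ih =>
      rw [Finset.sum_range_succ, ih]
      have : 1 ≤ 2 ^ t := Nat.one_le_two_pow
      have h2 : 2 ^ (t + 1) = 2 ^ t * 2 := by ring
      omega
  have hmn : m + 1 ≤ n := by omega
  have hpow : 2 ^ (m + 1) ≤ 2 ^ n := Nat.pow_le_pow_right (by norm_num) hmn
  have h1le : 1 ≤ 2 ^ (m + 1) := Nat.one_le_two_pow
  rw [hsum] at hTle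
  omega

/-- The set `R` of Kolmogorov-random strings (incompressible by half
under a universal machine `U`) is not computable. -/
theorem R_not_computable
    (U : List Bool →. List Bool) (hU : Partrec U)
    (h_univ : ∀ f : List Bool →. List Bool, Partrec f →
      ∃ c : ℕ, ∀ p y, y ∈ f p → ∃ q : List Bool, q.length ≤ p.length + c ∧ y ∈ U q) :
    ¬ ComputablePred
      (fun x : List Bool => ∀ p : List Bool, p.length ≤ x.length / 2 → ¬ x ∈ U p) := by
  intro hC
  set R : List Bool → Prop :=
    fun x : List Bool => ∀ p : List Bool, p.length ≤ x.length / 2 → ¬ x ∈ U p with hR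
  obtain ⟨D, hg⟩ := hC
  set g : List Bool → Bool := fun x => @decide (R x) (D x) with hgdef
  -- the checker function
  set F : List Bool → ℕ → Option (List Bool) := fun p n =>
    (Encodable.decode (α := List Bool) n).bind fun x =>
      bif x.length == 4 * p.length then (bif g x then Option.some x else Option.none)
        else Option.none with hF
  have hFc : Computable₂ F := by
    apply Computable.option_bind (Computable.decode.comp Computable.snd)
    show Computable fun q : (List Bool × ℕ) × List Bool =>
      bif q.2.length == 4 * q.1.1.length
        then (bif g q.2 then Option.some q.2 else Option.none) else Option.none
    exact Computable.cond
      ((Primrec.beq.comp (Primrec.list_length.comp Primrec.snd)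
        ((Primrec.nat_mul.comp (Primrec.const 4)
          (Primrec.list_length.comp (Primrec.fst.comp Primrec.fst))))).to_comp)
      (Computable.cond (hg.comp Computable.snd)
        (Computable.option_some.comp Computable.snd) (Computable.const Option.none))
      (Computable.const Option.none)
  set f : List Bool →. List Bool := fun p => Nat.rfindOpt (F p) with hfdef
  have hf : Partrec f := Partrec.rfindOpt hFc
  obtain ⟨c, hc⟩ := h_univ f hf
  -- a random string of length 4c+4
  obtain ⟨x, hxl, hxR⟩ := exists_random_aux U (4 * (c + 1)) (by omega)
  set p : List Bool := List.replicate (c + 1) false with hp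
  have hplen : p.length = c + 1 := List.length_replicate
  -- x witnesses the domain of f p
  have hxF : x ∈ F p (Encodable.encode x) := by
    have hgx : g x = true := by
      simp only [hgdef, decide_eq_true_iff]
      intro q hq hmem
      exact hxR q (by omega) hmem
    have hbeq : (x.length == 4 * p.length) = true := by
      rw [hxl, hplen]; exact beq_self_eq_true _
    rw [hF]
    simp [Encodable.encodek, hbeq, hgx]
  have hdom : (f p).Dom := Nat.rfindOpt_dom.2 ⟨_, _, hxF⟩
  set y : List Bool := (f p).get hdom with hy
  have hyf : y ∈ f p := Part.get_mem hdom
  -- y is a random string of length 4c+4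
  obtain ⟨n, hn⟩ := Nat.rfindOpt_spec hyf
  obtain ⟨z, hz1, hz2⟩ := Option.bind_eq_some_iff.1 hn
  have hzy : z = y ∧ z.length = 4 * p.length ∧ g z = true := by
    by_cases hb : (z.length == 4 * p.length) = true
    · by_cases hgz : g z = true
      · rw [hb, hgz] at hz2
        simp only [cond_true] at hz2
        exact ⟨Option.some.inj hz2, eq_of_beq hb, hgz⟩
      · rw [Bool.not_eq_true] at hgz
        rw [hb, hgz] at hz2
        simp at hz2
    · rw [Bool.not_eq_true] at hb
      rw [hb] at hz2
      simp at hz2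
  obtain ⟨rfl, hylen, hgy⟩ := hzy
  have hyR : R y := by
    have := hgdef ▸ hgy
    exact of_decide_eq_true this
  -- universality gives a short description of y, contradiction
  obtain ⟨q, hq1, hq2⟩ := hc p y hyf
  have : q.length ≤ y.length / 2 := by
    rw [hylen, hplen] at *
    omega
  exact hyR q this hq2
end

section
/- (Calude–Jürgensen style density) Suppose each sentence 'x ∈ R' is encoded by a string of length |x| + c for a fixed constant c, and T proves 'x ∈ R' for at most finitely many x. Then the proportion of length-n sentences that are of the form 'x ∈ R' with x ∈ R and unprovable in T is, for every ε > 0 and all sufficiently large n, at least 2^(−c) − ε. -/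
lemma ncard_len (m : ℕ) : {l : List Bool | l.length = m}.ncard = 2 ^ m := by
  have h : {l : List Bool | l.length = m} = Set.range (List.Vector.toList : List.Vector Bool m → List Bool) := by
    ext l
    constructor
    · intro h; exact ⟨⟨l, h⟩, rfl⟩
    · rintro ⟨v, rfl⟩; exact v.2
  rw [h, ← Nat.card_coe_set_eq,
    Nat.card_range_of_injective (fun a b h => List.Vector.toList_injective h),
    Nat.card_eq_fintype_card, card_vector, Fintype.card_bool]

lemma finlen (m : ℕ) : {l : List Bool | l.length = m}.Finite := by
  apply Set.finite_of_ncard_ne_zero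
  rw [ncard_len]; positivity

lemma finle (k : ℕ) : {l : List Bool | l.length ≤ k}.Finite ∧
    {l : List Bool | l.length ≤ k}.ncard ≤ 2 ^ (k+1) := by
  induction k with
  | zero =>
    have : {l : List Bool | l.length ≤ 0} = {[]} := by
      ext l; simp [List.length_eq_zero_iff]
    rw [this]; simp
  | succ k ih =>
    have hsplit : {l : List Bool | l.length ≤ k+1} =
        {l : List Bool | l.length ≤ k} ∪ {l : List Bool | l.length = k+1} := by
      ext l; simp only [Set.mem_setOf_eq, Set.mem_union]; omega
    constructor
    · rw [hsplit]; exact ih.1.union (finlen _)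
    · calc {l : List Bool | l.length ≤ k+1}.ncard
          ≤ {l : List Bool | l.length ≤ k}.ncard + {l : List Bool | l.length = k+1}.ncard := by
            rw [hsplit]; exact Set.ncard_union_le _ _
        _ ≤ 2^(k+1) + 2^(k+1) := Nat.add_le_add ih.2 (le_of_eq (ncard_len _))
        _ = 2^(k+2) := by ring

/-- Calude–Jürgensen style density: if each sentence `'x ∈ R'` is encoded
by a string of length `|x| + c` and `T` proves `'x ∈ R'` for at most finitely many `x`,
then the proportion of length-`n` sentences of the form `'x ∈ R'` with `x ∈ R` and
unprovable in `T` is at least `2^(-c) - ε` for all sufficiently large `n`. -/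
theorem density_unprovable_sentences
    (U : List Bool → Option (List Bool)) (c : ℕ)
    (enc : List Bool → List Bool)  -- x ↦ sentence 'x ∈ R', as a binary string
    (h_inj : Function.Injective enc)
    (h_len : ∀ x, (enc x).length = x.length + c)
    (Provable : List Bool → Prop)
    (h_fin : {x : List Bool | Provable (enc x)}.Finite) :
    ∀ ε : ℝ, ε > 0 → ∃ N : ℕ, ∀ n ≥ N,
      (({s : List Bool | s.length = n ∧ ∃ x : List Bool,
          (∀ p : List Bool, p.length ≤ x.length / 2 → U p ≠ some x) ∧
          ¬ Provable (enc x) ∧ enc x = s}.ncard : ℝ)) / 2 ^ n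
        ≥ 1 / 2 ^ c - ε := by
  intro ε hε
  set P : Set (List Bool) := {x : List Bool | Provable (enc x)} with hP
  set K : ℕ := P.ncard with hKdef
  have hKpos : (0:ℝ) < 2 + K := by positivity
  obtain ⟨M, hM⟩ := exists_pow_lt_of_lt_one (div_pos hε hKpos)
    (by norm_num : (1/2 : ℝ) < 1)
  have hM' : (2 + (K:ℝ)) < ε * 2 ^ M := by
    have hpM : (0:ℝ) < 2 ^ M := by positivity
    have h1 := mul_lt_mul_of_pos_left hM hpM
    have h2 : (2:ℝ) ^ M * (1/2) ^ M = 1 := by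
      rw [one_div, inv_pow, mul_inv_cancel₀ (by positivity)]
    rw [h2] at h1
    have h3 := mul_lt_mul_of_pos_right h1 hKpos
    rw [one_mul] at h3
    calc (2 + (K:ℝ)) < 2 ^ M * (ε / (2 + K)) * (2 + K) := h3
      _ = ε * 2 ^ M := by field_simp
  refine ⟨c + 2 * M, fun n hn => ?_⟩
  set m : ℕ := n - c with hmdef
  have hm : n = m + c := by omega
  have hMm : M ≤ m / 2 := by omega
  -- the three sets
  set X : Set (List Bool) := {x : List Bool | x.length = m ∧
      (∀ p : List Bool, p.length ≤ x.length / 2 → U p ≠ some x) ∧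
      ¬ Provable (enc x)} with hX
  set NR : Set (List Bool) := {x : List Bool | x.length = m ∧
      ∃ p : List Bool, p.length ≤ m / 2 ∧ U p = some x} with hNR
  set A : Set (List Bool) := {l : List Bool | l.length = m} with hA
  -- the statement set is the image of X
  have himg : {s : List Bool | s.length = n ∧ ∃ x : List Bool,
      (∀ p : List Bool, p.length ≤ x.length / 2 → U p ≠ some x) ∧
      ¬ Provable (enc x) ∧ enc x = s} = enc '' X := by
    ext s
    constructor
    · rintro ⟨hslen, x, hr, hnp, rfl⟩
      have hxl : x.length = m := by have := h_len x; omega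
      exact ⟨x, ⟨hxl, hr, hnp⟩, rfl⟩
    · rintro ⟨x, ⟨hxl, hr, hnp⟩, rfl⟩
      exact ⟨by rw [h_len x, hxl, hm], x, hr, hnp, rfl⟩
  rw [himg, Set.ncard_image_of_injective _ h_inj]
  -- covering: A ⊆ X ∪ NR ∪ P
  have hXA : X ⊆ A := fun x hx => hx.1
  have hNRA : NR ⊆ A := fun x hx => hx.1
  have hcover : A ⊆ X ∪ NR ∪ P := by
    intro x hx
    by_cases hp : Provable (enc x)
    · exact Or.inr hp
    by_cases hr : ∀ p : List Bool, p.length ≤ x.length / 2 → U p ≠ some x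
    · exact Or.inl (Or.inl ⟨hx, hr, hp⟩)
    · push_neg at hr
      obtain ⟨p, hpl, hpu⟩ := hr
      exact Or.inl (Or.inr ⟨hx, p, by rw [← hx]; exact hpl, hpu⟩)
  have hXfin : X.Finite := (finlen m).subset hXA
  have hNRfin : NR.Finite := (finlen m).subset hNRA
  -- bound on NR via injection into short programs
  have hNRcard : NR.ncard ≤ 2 ^ (m / 2 + 1) := by
    classical
    set F : List Bool → List Bool := fun x =>
      if h : ∃ p : List Bool, p.length ≤ m / 2 ∧ U p = some x then h.choose else []
    have hFspec : ∀ x ∈ NR, (F x).length ≤ m / 2 ∧ U (F x) = some x := by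
      intro x hx
      obtain ⟨-, hex⟩ := hx
      simp only [F, dif_pos hex]
      exact hex.choose_spec
    have hle : NR.ncard ≤ {l : List Bool | l.length ≤ m / 2}.ncard := by
      refine Set.ncard_le_ncard_of_injOn F (fun x hx => (hFspec x hx).1)
        ?_ (finle (m / 2)).1
      intro x hx y hy hxy
      have h1 := (hFspec x hx).2
      have h2 := (hFspec y hy).2
      rw [hxy, h2] at h1
      exact (Option.some_injective _ h1).symm
    exact hle.trans (finle (m / 2)).2
  -- main counting inequality in ℕ
  have hcount : 2 ^ m ≤ X.ncard + 2 ^ (m / 2 + 1) + K := by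
    calc 2 ^ m = A.ncard := (ncard_len m).symm
      _ ≤ (X ∪ NR ∪ P).ncard :=
          Set.ncard_le_ncard hcover ((hXfin.union hNRfin).union h_fin)
      _ ≤ (X ∪ NR).ncard + P.ncard := Set.ncard_union_le _ _
      _ ≤ X.ncard + NR.ncard + P.ncard := by
          exact Nat.add_le_add_right (Set.ncard_union_le _ _) _
      _ ≤ X.ncard + 2 ^ (m / 2 + 1) + K := by
          exact Nat.add_le_add (Nat.add_le_add_left hNRcard _) le_rfl
  -- pass to the reals
  have hcountR : (2:ℝ) ^ m ≤ X.ncard + 2 * 2 ^ (m / 2) + K := by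
    have := hcount
    have h2 : (2:ℝ) ^ (m / 2 + 1) = 2 * 2 ^ (m / 2) := by ring
    calc (2:ℝ) ^ m = ((2 ^ m : ℕ) : ℝ) := by push_cast; ring
      _ ≤ ((X.ncard + 2 ^ (m / 2 + 1) + K : ℕ) : ℝ) := by exact_mod_cast this
      _ = X.ncard + 2 * 2 ^ (m / 2) + K := by push_cast; ring
  -- the error term is small
  have haM : (2:ℝ) ^ M ≤ 2 ^ (m / 2) := by
    exact pow_le_pow_right₀ one_le_two hMm
  have haa : (2:ℝ) ^ (m / 2) * 2 ^ (m / 2) ≤ 2 ^ m := by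
    rw [← pow_add]
    exact pow_le_pow_right₀ one_le_two (by omega)
  have ha1 : (1:ℝ) ≤ 2 ^ (m / 2) := one_le_pow₀ one_le_two
  have hbn : (2:ℝ) ^ m ≤ 2 ^ n := pow_le_pow_right₀ one_le_two (by omega)
  have herr : 2 * (2:ℝ) ^ (m / 2) + K ≤ ε * 2 ^ n := by
    have h1 : ε * 2 ^ m ≤ ε * 2 ^ n := by gcongr
    have h2 : ε * ((2:ℝ) ^ (m / 2) * 2 ^ (m / 2)) ≤ ε * 2 ^ m :=
      mul_le_mul_of_nonneg_left haa hε.le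
    have h4 : (ε * (2:ℝ) ^ M) * 2 ^ (m / 2) ≤ (ε * 2 ^ (m / 2)) * 2 ^ (m / 2) := by
      have := mul_le_mul_of_nonneg_left haM hε.le
      exact mul_le_mul_of_nonneg_right this (by positivity)
    have h5 : ((2:ℝ) + K) * 2 ^ (m / 2) ≤ (ε * 2 ^ M) * 2 ^ (m / 2) :=
      mul_le_mul_of_nonneg_right hM'.le (by positivity)
    have h7 : (K:ℝ) * 1 ≤ K * 2 ^ (m / 2) :=
      mul_le_mul_of_nonneg_left ha1 (by positivity)
    nlinarith
  -- conclude
  have h2n : (0:ℝ) < 2 ^ n := by positivity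
  have hpow : (2:ℝ) ^ n = 2 ^ m * 2 ^ c := by rw [hm, pow_add]
  rw [ge_iff_le, le_div_iff₀ h2n]
  have hexp : (1 / (2:ℝ) ^ c - ε) * 2 ^ n = 2 ^ m - ε * 2 ^ n := by
    rw [sub_mul, hpow]; field_simp
  rw [hexp]
  linarith
end
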